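/- arXiv:2210.04300 — 4 statements merged into one kernel-verified Lean document; each statement's English description precedes it below -/
import Mathlib

section
/- Let g, φ : ℝ^d → ℝ be Lipschitz with constants [g], [φ], and for each a in a set A let F(·,a) : ℝ^d → ℝ^d be Lipschitz with constant at most e^{c·Δt} (uniformly in a). For n ≤ N, a = (a_n,…,a_{N-1}) ∈ A^{N-n}, define trajectories X_{n,x} = x, X_{k+1,x} = F(X_{k,x}, a_k), and the cost J_n(x,a) = max_{n ≤ k ≤ N-1} g(X_{k,x}) ∨ (g ∨ φ)(X_{N,x}). Then J_n(·,a) is Lipschitz with constant at most max([g],[φ])·e^{c·(N-n)·Δt}, and consequently V_n(x) := inf_{a ∈ A^{N-n}} J_n(x,a) is Lipschitz with the same bound. -/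
/-!
Each step `F(·, a)` is `e^{cΔt}`-Lipschitz, so by composition the `k`-th trajectory point is
`e^{kcΔt}`-Lipschitz in the initial state, and `e^{kcΔt} ≤ e^{(N-n)cΔt}` for `k ≤ N - n` since
`cΔt ≥ 0`. The cost is a finite maximum of `g` and `φ` along the trajectory, hence Lipschitz with
the largest of these constants, and the value function is an infimum of uniformly Lipschitz
functions that are bounded below by `g`, hence Lipschitz with the same constant.
-/

/-- Discrete controlled trajectory: `traj F a x 0 = x`, `traj F a x (k+1) = F (traj F a x k) (a k)`. -/
def traj {E A : Type*} (F : E → A → E) (a : ℕ → A) (x : E) : ℕ → E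
  | 0 => x
  | k + 1 => F (traj F a x k) (a k)

/-- The cost `J_n(x,a) = max_{n ≤ k ≤ N-1} g(X_{k,x}) ∨ (g ∨ φ)(X_{N,x})`, written with
trajectory steps indexed by `0,…,m` where `m = N - n` (so `(g∨φ)(X_N)` is absorbed as
`g(X_m) ∨ φ(X_m)`). -/
noncomputable def costJ {E A : Type*} (F : E → A → E) (g φ : E → ℝ)
    (m : ℕ) (x : E) (a : ℕ → A) : ℝ :=
  ((Finset.range (m + 1)).sup' (Finset.nonempty_range_iff.mpr (Nat.succ_ne_zero m))
    fun k => g (traj F a x k)) ⊔ φ (traj F a x m)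

open Finset

namespace LipschitzWith

variable {α ι : Type*} [PseudoMetricSpace α] {K : NNReal}

theorem finset_sup' {s : Finset ι} (hs : s.Nonempty) {f : ι → α → ℝ}
    (hf : ∀ i ∈ s, LipschitzWith K (f i)) : LipschitzWith K fun x => s.sup' hs fun i => f i x :=
  .of_le_add_mul K fun x y => sup'_le hs _ fun i hi =>
    ((hf i hi).le_add_mul x y).trans (by gcongr; exact le_sup' (f · y) hi)

theorem ciInf [Nonempty ι] {f : ι → α → ℝ} (hf : ∀ i, LipschitzWith K (f i))
    (hbdd : ∀ x, BddBelow (Set.range fun i => f i x)) : LipschitzWith K fun x => ⨅ i, f i x :=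
  .of_le_add_mul K fun x y => by
    have h : ∀ i, (⨅ i, f i x) - K * dist x y ≤ f i y := fun i => by
      linarith [ciInf_le (hbdd x) i, (hf i).le_add_mul x y]
    linarith [le_ciInf h]

end LipschitzWith

section Cost

variable {E A : Type*} {F : E → A → E} {g φ : E → ℝ}

theorem le_costJ (m : ℕ) (x : E) (a : ℕ → A) : g x ≤ costJ F g φ m x a :=
  le_sup_of_le_left (le_sup' (fun k => g (traj F a x k)) (mem_range.2 m.succ_pos))

variable [PseudoMetricSpace E] {Kg Kφ K : NNReal}

theorem lipschitzWith_traj (hF : ∀ a, LipschitzWith K fun x => F x a) (a : ℕ → A) (k : ℕ) :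
    LipschitzWith (K ^ k) fun x => traj F a x k := by
  induction k with
  | zero => rw [pow_zero]; exact LipschitzWith.id
  | succ k ih => rw [pow_succ']; exact (hF (a k)).comp ih

theorem lipschitzWith_costJ (hg : LipschitzWith Kg g) (hφ : LipschitzWith Kφ φ)
    (hF : ∀ a, LipschitzWith K fun x => F x a) (hK : 1 ≤ K) (m : ℕ) (a : ℕ → A) :
    LipschitzWith (max Kg Kφ * K ^ m) fun x => costJ F g φ m x a := by
  have htraj : ∀ k ≤ m, LipschitzWith (K ^ m) fun x => traj F a x k := fun k hk =>
    (lipschitzWith_traj hF a k).weaken (pow_le_pow_right₀ hK hk)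
  have hsup : LipschitzWith (max Kg Kφ * K ^ m) fun x =>
      (range (m + 1)).sup' (nonempty_range_iff.mpr m.succ_ne_zero) fun k => g (traj F a x k) :=
    .finset_sup' _ fun k hk => (hg.comp (htraj k (Nat.lt_succ_iff.mp (mem_range.mp hk)))).weaken
      (by gcongr; exact le_max_left _ _)
  have hlast : LipschitzWith (max Kg Kφ * K ^ m) fun x => φ (traj F a x m) :=
    (hφ.comp (htraj m le_rfl)).weaken (by gcongr; exact le_max_right _ _)
  rw [← max_self (max Kg Kφ * K ^ m)]
  exact hsup.max hlast

theorem lipschitzWith_iInf_costJ [Nonempty A] (hg : LipschitzWith Kg g)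
    (hφ : LipschitzWith Kφ φ) (hF : ∀ a, LipschitzWith K fun x => F x a) (hK : 1 ≤ K)
    (m : ℕ) : LipschitzWith (max Kg Kφ * K ^ m) fun x => ⨅ a : ℕ → A, costJ F g φ m x a :=
  .ciInf (lipschitzWith_costJ hg hφ hF hK m) fun x =>
    ⟨g x, by rintro _ ⟨a, rfl⟩; exact le_costJ m x a⟩

end Cost

theorem stmt_2_general {d : ℕ} {A : Type*} [Nonempty A]
    (F : (Fin d → ℝ) → A → (Fin d → ℝ)) (g φ : (Fin d → ℝ) → ℝ)
    (Lg Lφ c Δt : ℝ) (hc : 0 ≤ c) (hΔt : 0 < Δt)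
    (hg : ∀ x y, |g x - g y| ≤ Lg * ‖x - y‖)
    (hφ : ∀ x y, |φ x - φ y| ≤ Lφ * ‖x - y‖)
    (hF : ∀ (a : A) (x y : Fin d → ℝ), ‖F x a - F y a‖ ≤ Real.exp (c * Δt) * ‖x - y‖)
    (N n : ℕ) :
    (∀ (a : ℕ → A) (x y : Fin d → ℝ),
        |costJ F g φ (N - n) x a - costJ F g φ (N - n) y a|
          ≤ max Lg Lφ * Real.exp (c * (N - n : ℕ) * Δt) * ‖x - y‖) ∧
    (∀ x y : Fin d → ℝ,
        |(⨅ a : ℕ → A, costJ F g φ (N - n) x a) - (⨅ a : ℕ → A, costJ F g φ (N - n) y a)|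
          ≤ max Lg Lφ * Real.exp (c * (N - n : ℕ) * Δt) * ‖x - y‖) := by
  rcases subsingleton_or_nontrivial (Fin d → ℝ) with _ | _
  · exact ⟨fun a x y => by simp [Subsingleton.elim x y], fun x y => by simp [Subsingleton.elim x y]⟩
  -- In a nontrivial space the Lipschitz bounds on `g` and `φ` force `Lg, Lφ ≥ 0`.
  obtain ⟨x₀, y₀, hne⟩ := exists_pair_ne (Fin d → ℝ)
  have hpos : 0 < ‖x₀ - y₀‖ := norm_pos_iff.2 (sub_ne_zero.2 hne)
  lift Lg to NNReal using nonneg_of_mul_nonneg_left ((abs_nonneg _).trans (hg x₀ y₀)) hpos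
  lift Lφ to NNReal using nonneg_of_mul_nonneg_left ((abs_nonneg _).trans (hφ x₀ y₀)) hpos
  have hK1 : 1 ≤ Real.exp (c * Δt) := Real.one_le_exp (mul_nonneg hc hΔt.le)
  have hexp : Real.exp (c * (N - n : ℕ) * Δt) = Real.exp (c * Δt) ^ (N - n) := by
    rw [← Real.exp_nat_mul]; ring_nf
  rw [hexp]
  lift Real.exp (c * Δt) to NNReal using (Real.exp_pos _).le with K
  have hgL : LipschitzWith Lg g := .of_dist_le_mul fun x y => by
    simpa [Real.dist_eq, dist_eq_norm] using hg x y
  have hφL : LipschitzWith Lφ φ := .of_dist_le_mul fun x y => by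
    simpa [Real.dist_eq, dist_eq_norm] using hφ x y
  have hFL : ∀ a, LipschitzWith K fun x => F x a := fun a => .of_dist_le_mul fun x y => by
    simpa [dist_eq_norm] using hF a x y
  refine ⟨fun a x y => ?_, fun x y => ?_⟩
  · simpa [Real.dist_eq, dist_eq_norm] using
      (lipschitzWith_costJ hgL hφL hFL (by exact_mod_cast hK1) (N - n) a).dist_le_mul x y
  · simpa [Real.dist_eq, dist_eq_norm] using
      (lipschitzWith_iInf_costJ hgL hφL hFL (by exact_mod_cast hK1) (N - n)).dist_le_mul x y

/-- If `g, φ` are Lipschitz with constants `Lg, Lφ` and each `F(·,a)` is Lipschitz with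
constant at most `e^{cΔt}` uniformly in `a`, then `J_n(·,a)` is Lipschitz with constant
`max(Lg,Lφ)·e^{c(N-n)Δt}`, and so is the value `V_n = inf_a J_n(·,a)`. -/
theorem stmt_2 {d : ℕ} {A : Type*} [Nonempty A]
    (F : (Fin d → ℝ) → A → (Fin d → ℝ)) (g φ : (Fin d → ℝ) → ℝ)
    (Lg Lφ c Δt : ℝ) (hc : 0 ≤ c) (hΔt : 0 < Δt)
    (hg : ∀ x y, |g x - g y| ≤ Lg * ‖x - y‖)
    (hφ : ∀ x y, |φ x - φ y| ≤ Lφ * ‖x - y‖)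
    (hF : ∀ (a : A) (x y : Fin d → ℝ), ‖F x a - F y a‖ ≤ Real.exp (c * Δt) * ‖x - y‖)
    (N n : ℕ) (hn : n ≤ N) :
    (∀ (a : ℕ → A) (x y : Fin d → ℝ),
        |costJ F g φ (N - n) x a - costJ F g φ (N - n) y a|
          ≤ max Lg Lφ * Real.exp (c * (N - n : ℕ) * Δt) * ‖x - y‖) ∧
    (∀ x y : Fin d → ℝ,
        |(⨅ a : ℕ → A, costJ F g φ (N - n) x a) - (⨅ a : ℕ → A, costJ F g φ (N - n) y a)|
          ≤ max Lg Lφ * Real.exp (c * (N - n : ℕ) * Δt) * ‖x - y‖) :=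
  stmt_2_general F g φ Lg Lφ c Δt hc hΔt hg hφ hF N n
end

section
/- Under the same hypotheses, for all x, y ∈ ℝ^d and controls a₀, ā₀: the p-fold iterates satisfy |F_h(·,a₀)^(p)(x) - F_h(·,ā₀)^(p)(y)| ≤ e^{C₁Δt}·( |x - y| + C₂·Δt·|a₀ - ā₀| ), where C₁ = 2|c|₁[f]₁, C₂ = 2|c|₁[f]₂, and Δt = p·h. -/
/-!
One step of the scheme is a perturbed Lipschitz estimate: the error `eₙ = |xₙ - yₙ|` satisfies
`eₙ₊₁ ≤ E eₙ + K` with `E = exp (2h|c|₁[f]₁)` and `K = 2h|c|₁[f]₂|a₀ - ā₀|`. The discrete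
Grönwall inequality, with every power `E ^ (n - k - 1)` bounded crudely by `E ^ n`, gives
`eₚ ≤ E ^ p (e₀ + p K)`, and `E ^ p = exp (2|c|₁[f]₁ p h)`.
-/

open Finset

theorem le_pow_mul_add_of_le_mul_add {R : Type*} [CommSemiring R] [PartialOrder R]
    [IsOrderedRing R] {u : ℕ → R} {E K : R} (hE : 1 ≤ E) (hK : 0 ≤ K)
    (hu : ∀ n, u (n + 1) ≤ E * u n + K) (n : ℕ) :
    u n ≤ E ^ n * (u 0 + n * K) := by
  have hE₀ : 0 ≤ E := zero_le_one.trans hE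
  calc u n ≤ u 0 * ∏ _ ∈ Ico 0 n, E + ∑ k ∈ Ico 0 n, K * ∏ _ ∈ Ico (k + 1) n, E :=
        discrete_gronwall_prod_general (fun n _ ↦ hu n) (fun _ _ ↦ hE₀) n.zero_le
    _ ≤ u 0 * E ^ n + ∑ _ ∈ Ico 0 n, K * E ^ n := by
        simp only [prod_const, Nat.card_Ico, Nat.sub_zero]
        gcongr with k hk
        omega
    _ = E ^ n * (u 0 + n * K) := by simp [sum_const]; ring

theorem dist_iterate_le_pow_mul_of_dist_le {X : Type*} [PseudoMetricSpace X] {f g : X → X}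
    {E K : ℝ} (hE : 1 ≤ E) (hK : 0 ≤ K) (hfg : ∀ x y, dist (f x) (g y) ≤ E * dist x y + K)
    (n : ℕ) (x y : X) :
    dist (f^[n] x) (g^[n] y) ≤ E ^ n * (dist x y + n * K) :=
  le_pow_mul_add_of_le_mul_add (u := fun n ↦ dist (f^[n] x) (g^[n] y)) hE hK
    (fun n ↦ by simpa only [Function.iterate_succ_apply'] using hfg _ _) n

/-- Stability of the `p`-fold iterated Runge–Kutta map with frozen controls:
`|F_h(·,a₀)^(p)(x) - F_h(·,ā₀)^(p)(y)| ≤ e^{C₁Δt}(|x-y| + C₂Δt|a₀-ā₀|)` with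
`C₁ = 2|c|₁[f]₁`, `C₂ = 2|c|₁[f]₂` and `Δt = p·h`. -/
theorem stmt_9 {d κ : ℕ}
    (Fh : (Fin d → ℝ) → (Fin κ → ℝ) → (Fin d → ℝ))
    (c1 L1 L2 h Δt : ℝ) (p : ℕ)
    (hc1 : 0 ≤ c1) (hL1 : 0 ≤ L1) (hL2 : 0 ≤ L2) (hh : 0 < h) (hΔt : Δt = p * h)
    (hstep : ∀ (x y : Fin d → ℝ) (a₀ abar₀ : Fin κ → ℝ),
        ‖Fh x a₀ - Fh y abar₀‖
          ≤ Real.exp (2 * h * c1 * L1) * ‖x - y‖ + 2 * h * c1 * L2 * ‖a₀ - abar₀‖) :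
    ∀ (x y : Fin d → ℝ) (a₀ abar₀ : Fin κ → ℝ),
      ‖(fun z => Fh z a₀)^[p] x - (fun z => Fh z abar₀)^[p] y‖
        ≤ Real.exp (2 * c1 * L1 * Δt) * (‖x - y‖ + 2 * c1 * L2 * Δt * ‖a₀ - abar₀‖) := by
  intro x y a₀ abar₀
  have hstep_dist : ∀ x y, dist (Fh x a₀) (Fh y abar₀)
      ≤ Real.exp (2 * h * c1 * L1) * dist x y + 2 * h * c1 * L2 * ‖a₀ - abar₀‖ := by
    simpa only [dist_eq_norm] using fun x y ↦ hstep x y a₀ abar₀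
  have h_iter := dist_iterate_le_pow_mul_of_dist_le (Real.one_le_exp (by positivity))
    (by positivity) hstep_dist p x y
  rw [dist_eq_norm, dist_eq_norm, ← Real.exp_nat_mul] at h_iter
  subst hΔt
  convert h_iter using 2
  · congr 1; ring
  · ring
end

section
/- Let F_h be a Runge–Kutta scheme with h·‖B‖_∞·[f]₁ ≤ 1/2, and let C_f := max_{a∈A} |f(0,a)|. Then for all x ∈ ℝ^d and a ∈ A: |F_h(x,a)| ≤ |x| + 2h·|c|₁·max(C_f, [f]₁)·(|x| + 1). -/
/-!
Let `M` be the largest of the stage slopes `‖f (yᵢ, a)‖`. Each stage satisfies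
`‖yᵢ‖ ≤ ‖x‖ + h‖B‖_∞ M`, so the Lipschitz bound `‖f (y, a)‖ ≤ C_f + [f]₁‖y‖` gives
`M ≤ C_f + [f]₁‖x‖ + h‖B‖_∞[f]₁ M ≤ C_f + [f]₁‖x‖ + M / 2`, i.e. `M ≤ 2 (C_f + [f]₁‖x‖)`.
The output increment is then at most `h |c|₁ M`.
-/

open Finset

theorem norm_le_add_mul_norm_of_lipschitz {E F : Type*} [SeminormedAddCommGroup E]
    [SeminormedAddCommGroup F] {g : E → F} {C L : ℝ} (hg : ∀ y y', ‖g y - g y'‖ ≤ L * ‖y - y'‖)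
    (hC : ‖g 0‖ ≤ C) (y : E) :
    ‖g y‖ ≤ C + L * ‖y‖ :=
  calc ‖g y‖ ≤ ‖g y - g 0‖ + ‖g 0‖ := norm_le_norm_sub_add _ _
    _ ≤ L * ‖y - 0‖ + C := add_le_add (hg y 0) hC
    _ = C + L * ‖y‖ := by rw [sub_zero, add_comm]

section

variable {E : Type*} [SeminormedAddCommGroup E] [NormedSpace ℝ E] {ι : Type*} [Fintype ι]

theorem norm_add_smul_sum_smul_le {x : E} {h M : ℝ} (hh : 0 ≤ h) (c : ι → ℝ) {v : ι → E}
    (hv : ∀ i, ‖v i‖ ≤ M) :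
    ‖x + h • ∑ i, c i • v i‖ ≤ ‖x‖ + h * (∑ i, |c i|) * M :=
  calc ‖x + h • ∑ i, c i • v i‖ ≤ ‖x‖ + h * ∑ i, ‖c i • v i‖ := by
        grw [norm_add_le, norm_smul, Real.norm_of_nonneg hh, norm_sum_le]
    _ ≤ ‖x‖ + h * ∑ i, |c i| * M := by
        gcongr with i
        rw [norm_smul, Real.norm_eq_abs]
        exact mul_le_mul_of_nonneg_left (hv i) (abs_nonneg _)
    _ = ‖x‖ + h * (∑ i, |c i|) * M := by rw [← sum_mul, mul_assoc]

theorem norm_rungeKutta_slope_le {g : E → E} {C L h nB : ℝ} (hL : 0 ≤ L)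
    (hg : ∀ y, ‖g y‖ ≤ C + L * ‖y‖) (hh : 0 ≤ h) {B : ι → ι → ℝ}
    (hB : ∀ i, ∑ j, |B i j| ≤ nB) (hsmall : h * nB * L ≤ 1 / 2) {x : E} {ys : ι → E}
    (hys : ∀ i, ys i = x + h • ∑ j, B i j • g (ys j)) (i : ι) :
    ‖g (ys i)‖ ≤ 2 * (C + L * ‖x‖) := by
  have : Nonempty ι := ⟨i⟩
  obtain ⟨k, hk⟩ := Finite.exists_max fun j => ‖g (ys j)‖
  have hyk : ‖ys k‖ ≤ ‖x‖ + h * nB * ‖g (ys k)‖ := by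
    conv_lhs => rw [hys k]
    grw [norm_add_smul_sum_smul_le hh (B k) hk, hB k]
  have hgk : ‖g (ys k)‖ ≤ C + L * ‖x‖ + h * nB * L * ‖g (ys k)‖ := by
    grw [hg, hyk]
    exact le_of_eq (by ring)
  have halve : h * nB * L * ‖g (ys k)‖ ≤ ‖g (ys k)‖ / 2 := by
    nlinarith [norm_nonneg (g (ys k))]
  linarith [hk i]

end

theorem add_mul_le_max_mul_add_one {a b t : ℝ} (ht : 0 ≤ t) : a + b * t ≤ max a b * (t + 1) := by
  nlinarith [le_max_left a b, le_max_right a b]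

/-- Linear growth bound for a Runge–Kutta step:
`|F_h(x,a)| ≤ |x| + 2h|c|₁ max(C_f,[f]₁)(|x|+1)` under `h‖B‖_∞[f]₁ ≤ 1/2`. -/
theorem stmt_10 {d q κ : ℕ} (A : Set (Fin κ → ℝ))
    (B : Fin q → Fin q → ℝ) (c : Fin q → ℝ)
    (f : (Fin d → ℝ) → (Fin κ → ℝ) → (Fin d → ℝ)) (L1 Cf : ℝ)
    (hL1 : 0 ≤ L1)
    (hf : ∀ (x x' : Fin d → ℝ) (a : Fin κ → ℝ), ‖f x a - f x' a‖ ≤ L1 * ‖x - x'‖)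
    (hCf : ∀ a ∈ A, ‖f 0 a‖ ≤ Cf)
    (h nB : ℝ) (hh : 0 < h) (hnB : ∀ i, ∑ j, |B i j| ≤ nB)
    (hsmall : h * nB * L1 ≤ 1 / 2)
    (x : Fin d → ℝ) (a : Fin κ → ℝ) (ha : a ∈ A)
    (ys : Fin q → (Fin d → ℝ))
    (hys : ∀ i, ys i = x + h • ∑ j, B i j • f (ys j) a) :
    ‖x + h • ∑ i, c i • f (ys i) a‖
      ≤ ‖x‖ + 2 * h * (∑ i, |c i|) * max Cf L1 * (‖x‖ + 1) := by
  have growth := norm_le_add_mul_norm_of_lipschitz (fun y y' => hf y y' a) (hCf a ha)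
  have slope := norm_rungeKutta_slope_le hL1 growth hh.le hnB hsmall hys
  grw [norm_add_smul_sum_smul_le hh.le c slope, add_mul_le_max_mul_add_one (norm_nonneg x)]
  exact le_of_eq (by ring)
end

section
/- Let F_h be a Runge–Kutta scheme with h·‖B‖_∞·[f]₁ ≤ 1/2, and let a : ℝ^d → A be Lipschitz with constant [a]. Define F_h^a(x) := F_h(x, a(x)). Then the map x ↦ F_h^a(x) - x is Lipschitz with constant at most 2·|c|₁·([f]₁ + [f]₂·[a])·h. -/
/-! The stage differences `Yᵢ - Y'ᵢ` satisfy a fixed-point inequality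
`max ‖Yᵢ - Y'ᵢ‖ ≤ ‖x - x'‖ + h ‖B‖_∞ (L₁ max ‖Yᵢ - Y'ᵢ‖ + L₂ ‖b - b'‖)`; the smallness
`h ‖B‖_∞ L₁ ≤ 1/2` lets one absorb the stage term, so the right-hand sides of `f` at the stages
differ by at most `2 (L₁ ‖x - x'‖ + L₂ ‖b - b'‖)`. The increment `h Σ cᵢ f(Yᵢ, b)` of one step
then differs by at most `h |c|₁` times that. -/

section RungeKutta

variable {ι E P : Type*} [Fintype ι] [SeminormedAddCommGroup E] [NormedSpace ℝ E]
  [SeminormedAddCommGroup P]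

theorem norm_sum_smul_le_of_forall_norm_le (w : ι → ℝ) (v : ι → E) {S : ℝ}
    (hv : ∀ i, ‖v i‖ ≤ S) : ‖∑ i, w i • v i‖ ≤ (∑ i, |w i|) * S :=
  calc ‖∑ i, w i • v i‖ ≤ ∑ i, ‖w i • v i‖ := norm_sum_le _ _
    _ ≤ ∑ i, |w i| * S := by
        gcongr with i
        rw [norm_smul, Real.norm_eq_abs]
        exact mul_le_mul_of_nonneg_left (hv i) (abs_nonneg _)
    _ = (∑ i, |w i|) * S := (Finset.sum_mul ..).symm

variable {f : E → P → E} {L1 L2 : ℝ} (hL1 : 0 ≤ L1)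
  (hf : ∀ x x' b b', ‖f x b - f x' b'‖ ≤ L1 * ‖x - x'‖ + L2 * ‖b - b'‖)
include hL1 hf

theorem norm_sum_smul_sub_sum_smul_le (w : ι → ℝ) (Y Y' : ι → E) (b b' : P) :
    ‖∑ i, w i • f (Y i) b - ∑ i, w i • f (Y' i) b'‖
      ≤ (∑ i, |w i|) * (L1 * ‖Y - Y'‖ + L2 * ‖b - b'‖) := by
  rw [← Finset.sum_sub_distrib]
  simp_rw [← smul_sub]
  refine norm_sum_smul_le_of_forall_norm_le w _ fun i => (hf _ _ _ _).trans ?_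
  gcongr
  exact norm_le_pi_norm (Y - Y') i

theorem stage_lipschitz_bound (hL2 : 0 ≤ L2) {B : ι → ι → ℝ} {h nB : ℝ} (hh : 0 ≤ h)
    (hnB : ∀ i, ∑ j, |B i j| ≤ nB) (hsmall : h * nB * L1 ≤ 1 / 2)
    {x x' : E} {b b' : P} {Y Y' : ι → E}
    (hY : ∀ i, Y i = x + h • ∑ j, B i j • f (Y j) b)
    (hY' : ∀ i, Y' i = x' + h • ∑ j, B i j • f (Y' j) b') :
    L1 * ‖Y - Y'‖ + L2 * ‖b - b'‖ ≤ 2 * (L1 * ‖x - x'‖ + L2 * ‖b - b'‖) := by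
  rcases isEmpty_or_nonempty ι with hι | hι
  · rw [Subsingleton.elim Y Y', sub_self, norm_zero, mul_zero, zero_add]
    linarith [mul_nonneg hL1 (norm_nonneg (x - x')), mul_nonneg hL2 (norm_nonneg (b - b'))]
  set S := L1 * ‖Y - Y'‖ + L2 * ‖b - b'‖
  have hS : 0 ≤ S := by positivity
  have hstages : ‖Y - Y'‖ ≤ ‖x - x'‖ + h * (nB * S) := by
    refine (pi_norm_le_iff_of_nonempty _).2 fun i => ?_
    calc ‖(Y - Y') i‖
        = ‖(x - x') + h • (∑ j, B i j • f (Y j) b - ∑ j, B i j • f (Y' j) b')‖ := by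
          rw [Pi.sub_apply, hY i, hY' i, smul_sub]
          abel_nf
      _ ≤ ‖x - x'‖ + h * ((∑ j, |B i j|) * S) := by
          refine (norm_add_le _ _).trans ?_
          rw [norm_smul, Real.norm_of_nonneg hh]
          gcongr
          exact norm_sum_smul_sub_sum_smul_le hL1 hf _ _ _ _ _
      _ ≤ ‖x - x'‖ + h * (nB * S) := by gcongr; exact hnB i
  have habsorb : L1 * (h * (nB * S)) ≤ S / 2 := by
    linarith [mul_le_mul_of_nonneg_right hsmall hS]
  linarith [mul_le_mul_of_nonneg_left hstages hL1]

theorem norm_step_increment_sub_le (hL2 : 0 ≤ L2) {B : ι → ι → ℝ} (c : ι → ℝ) {h nB : ℝ}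
    (hh : 0 ≤ h) (hnB : ∀ i, ∑ j, |B i j| ≤ nB) (hsmall : h * nB * L1 ≤ 1 / 2)
    {x x' : E} {b b' : P} {Y Y' : ι → E}
    (hY : ∀ i, Y i = x + h • ∑ j, B i j • f (Y j) b)
    (hY' : ∀ i, Y' i = x' + h • ∑ j, B i j • f (Y' j) b') :
    ‖h • ∑ i, c i • f (Y i) b - h • ∑ i, c i • f (Y' i) b'‖
      ≤ 2 * (∑ i, |c i|) * h * (L1 * ‖x - x'‖ + L2 * ‖b - b'‖) := by
  rw [← smul_sub, norm_smul, Real.norm_of_nonneg hh]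
  calc h * ‖∑ i, c i • f (Y i) b - ∑ i, c i • f (Y' i) b'‖
      ≤ h * ((∑ i, |c i|) * (L1 * ‖Y - Y'‖ + L2 * ‖b - b'‖)) := by
        gcongr
        exact norm_sum_smul_sub_sum_smul_le hL1 hf _ _ _ _ _
    _ ≤ h * ((∑ i, |c i|) * (2 * (L1 * ‖x - x'‖ + L2 * ‖b - b'‖))) := by
        gcongr
        exact stage_lipschitz_bound hL1 hf hL2 hh hnB hsmall hY hY'
    _ = _ := by ring

end RungeKutta

theorem stmt_11_general {d q κ : ℕ}
    (B : Fin q → Fin q → ℝ) (c : Fin q → ℝ)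
    (f : (Fin d → ℝ) → (Fin κ → ℝ) → (Fin d → ℝ)) (L1 L2 : ℝ)
    (hL1 : 0 ≤ L1) (hL2 : 0 ≤ L2)
    (hf : ∀ (x x' : Fin d → ℝ) (b b' : Fin κ → ℝ),
        ‖f x b - f x' b'‖ ≤ L1 * ‖x - x'‖ + L2 * ‖b - b'‖)
    (h nB : ℝ) (hh : 0 < h) (hnB : ∀ i, ∑ j, |B i j| ≤ nB)
    (hsmall : h * nB * L1 ≤ 1 / 2)
    (a : (Fin d → ℝ) → (Fin κ → ℝ)) (La : ℝ)
    (ha : ∀ x y, ‖a x - a y‖ ≤ La * ‖x - y‖)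
    (ys : (Fin d → ℝ) → (Fin κ → ℝ) → Fin q → (Fin d → ℝ))
    (hys : ∀ (x : Fin d → ℝ) (b : Fin κ → ℝ) (i : Fin q),
        ys x b i = x + h • ∑ j, B i j • f (ys x b j) b)
    (Fh : (Fin d → ℝ) → (Fin κ → ℝ) → (Fin d → ℝ))
    (hFh : ∀ (x : Fin d → ℝ) (b : Fin κ → ℝ),
        Fh x b = x + h • ∑ i, c i • f (ys x b i) b) :
    ∀ x y : Fin d → ℝ,
      ‖(Fh x (a x) - x) - (Fh y (a y) - y)‖
        ≤ 2 * (∑ i, |c i|) * (L1 + L2 * La) * h * ‖x - y‖ := by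
  intro x y
  rw [hFh, hFh, add_sub_cancel_left, add_sub_cancel_left]
  calc _ ≤ 2 * (∑ i, |c i|) * h * (L1 * ‖x - y‖ + L2 * ‖a x - a y‖) :=
        norm_step_increment_sub_le hL1 hf hL2 c hh.le hnB hsmall (hys x (a x)) (hys y (a y))
    _ ≤ 2 * (∑ i, |c i|) * h * (L1 * ‖x - y‖ + L2 * (La * ‖x - y‖)) := by
        gcongr
        exact ha x y
    _ = _ := by ring

/-- Near-identity estimate for an RK step with Lipschitz feedback:
`x ↦ F_h(x, a(x)) - x` is Lipschitz with constant `2|c|₁([f]₁ + [f]₂[a])h`. -/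
theorem stmt_11 {d q κ : ℕ}
    (B : Fin q → Fin q → ℝ) (c : Fin q → ℝ)
    (f : (Fin d → ℝ) → (Fin κ → ℝ) → (Fin d → ℝ)) (L1 L2 : ℝ)
    (hL1 : 0 ≤ L1) (hL2 : 0 ≤ L2)
    (hf : ∀ (x x' : Fin d → ℝ) (b b' : Fin κ → ℝ),
        ‖f x b - f x' b'‖ ≤ L1 * ‖x - x'‖ + L2 * ‖b - b'‖)
    (h nB : ℝ) (hh : 0 < h) (hnB : ∀ i, ∑ j, |B i j| ≤ nB)
    (hsmall : h * nB * L1 ≤ 1 / 2)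
    (a : (Fin d → ℝ) → (Fin κ → ℝ)) (La : ℝ) (hLa : 0 ≤ La)
    (ha : ∀ x y, ‖a x - a y‖ ≤ La * ‖x - y‖)
    (ys : (Fin d → ℝ) → (Fin κ → ℝ) → Fin q → (Fin d → ℝ))
    (hys : ∀ (x : Fin d → ℝ) (b : Fin κ → ℝ) (i : Fin q),
        ys x b i = x + h • ∑ j, B i j • f (ys x b j) b)
    (Fh : (Fin d → ℝ) → (Fin κ → ℝ) → (Fin d → ℝ))
    (hFh : ∀ (x : Fin d → ℝ) (b : Fin κ → ℝ),
        Fh x b = x + h • ∑ i, c i • f (ys x b i) b) :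
    ∀ x y : Fin d → ℝ,
      ‖(Fh x (a x) - x) - (Fh y (a y) - y)‖
        ≤ 2 * (∑ i, |c i|) * (L1 + L2 * La) * h * ‖x - y‖ :=
  stmt_11_general B c f L1 L2 hL1 hL2 hf h nB hh hnB hsmall a La ha ys hys Fh hFh
end
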